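/- If J₁ = J₂ = J₄ = {0}, then B = [A,A] is spanned by the following elements: all x^{α,i} with (α₂,α₄) ≠ (0,0); all x^{β,i} with (β₂,β₄) = (0,0) and β₁ ≠ 1; and all elements γ₃ x^{γ+δ,i} + i₃ x^{γ+δ,i−1_[3]} + 2 x^{γ,i} with (γ₂,γ₄) = (0,0) and γ₁ = 1 (here i ranges over J in each case). -/

import Mathlib

namespace SuBlock

variable (F : Type*) [Field F]

def sigmaV : Fin 4 → F := ![1, 0, 1, 0]

def deltaV (d : F) : Fin 4 → F := ![0, 0, d, 0]

/-- The data `(Γ, J, δ)` of the paper: `δ₃ ∈ F \ {0}`, `Γ ≤ F⁴` an additive subgroup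
containing `σ = (1,0,1,0)` and `δ = (0,0,δ₃,0)`, with `ker π₄ ⊄ ker π₂` whenever `π₂ ≠ 0`,
and `J_p` encoded by `m p : Bool` (`J_p = ℕ` iff `m p = true`), with `J_q ≠ {0}`
whenever `π_q = 0`, for `q = 2,4`.  (Coordinates `1,2,3,4` are `Fin 4` indices `0,1,2,3`.) -/
structure Datum where
  d3 : F
  d3_ne : d3 ≠ 0
  Γ : AddSubgroup (Fin 4 → F)
  m : Fin 4 → Bool
  sigma_mem : sigmaV F ∈ Γ
  delta_mem : deltaV F d3 ∈ Γ
  ker_cond : (∃ α ∈ Γ, α 1 ≠ 0) → ∃ α ∈ Γ, α 3 = 0 ∧ α 1 ≠ 0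
  J2_cond : (∀ α ∈ Γ, α 1 = 0) → m 1 = true
  J4_cond : (∀ α ∈ Γ, α 3 = 0) → m 3 = true

variable {F}

/-- The monoid `J = J₁ × J₂ × J₃ × J₄ ⊆ ℕ⁴`, where `J_p = ℕ` if `m p = true` and
`J_p = {0}` otherwise. -/
def Jmon (m : Fin 4 → Bool) : AddSubmonoid (Fin 4 → ℕ) where
  carrier := {i | ∀ p, m p = false → i p = 0}
  zero_mem' := fun p _ => rfl
  add_mem' := fun ha hb p hp => by
    simp only [Set.mem_setOf_eq] at ha hb
    simp [Pi.add_apply, ha p hp, hb p hp]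

/-- The commutative associative algebra `A = A(Γ,J)`, the semigroup algebra of `Γ × J`
with basis `x^{α,i}`, `(α,i) ∈ Γ × J`. -/
abbrev Alg (D : Datum F) : Type _ := AddMonoidAlgebra F (↥D.Γ × ↥(Jmon D.m))

/-- The basis element `x^{α,i}`. -/
noncomputable def X (D : Datum F) (g : ↥D.Γ × ↥(Jmon D.m)) : Alg D :=
  AddMonoidAlgebra.single g 1

/-- `i - 1_[p]` (truncated subtraction). -/
def subE {m : Fin 4 → Bool} (i : ↥(Jmon m)) (p : Fin 4) : ↥(Jmon m) :=
  ⟨i.1 - Pi.single p 1, fun q hq => by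
    have h : i.1 q = 0 := i.2 q hq
    simp only [Pi.sub_apply, h, Nat.zero_sub]⟩

/-- `∂_p x^{α,i} = α_p x^{α,i} + i_p x^{α,i-1_[p]}` (coordinates are `Fin 4` indexed). -/
noncomputable def Dmon (D : Datum F) (p : Fin 4) (g : ↥D.Γ × ↥(Jmon D.m)) : Alg D :=
  (g.1.1 p) • X D g + ((g.2.1 p : F)) • X D (g.1, subE g.2 p)

/-- The derivation `∂_p` of `A`, extended linearly from its values on the basis. -/
noncomputable def Dop (D : Datum F) (p : Fin 4) (u : Alg D) : Alg D :=
  Finsupp.sum u.coeff fun g c => c • Dmon D p g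

/-- The Lie bracket (1.6):
`[u,v] = x^{σ,0}(∂₁(u)∂₂(v) − ∂₁(v)∂₂(u)) + (x^{δ,0}∂₃(u) + u)∂₄(v) − ∂₄(u)(x^{δ,0}∂₃(v) + v)`. -/
noncomputable def br (D : Datum F) (u v : Alg D) : Alg D :=
  X D (⟨sigmaV F, D.sigma_mem⟩, 0) * (Dop D 0 u * Dop D 1 v - Dop D 0 v * Dop D 1 u)
    + (X D (⟨deltaV F D.d3, D.delta_mem⟩, 0) * Dop D 2 u + u) * Dop D 3 v
    - Dop D 3 u * (X D (⟨deltaV F D.d3, D.delta_mem⟩, 0) * Dop D 2 v + v)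

/-- The derived subalgebra `B = [A,A]`, the span of all brackets. -/
noncomputable def Bspan (D : Datum F) : Submodule F (Alg D) :=
  Submodule.span F {w | ∃ u v : Alg D, w = br D u v}

/-!
With `J₁ = J₂ = J₄ = {0}` the operators `∂₁, ∂₂, ∂₄` are diagonal on the basis, so with
`T = x^{δ,0}∂₃ + 1` the bracket of two basis elements is
`[x^g, x^h] = (g₁h₂ - h₁g₂) x^{σ+g+h} + h₄ T(x^g) x^h - g₄ x^g T(x^h)`,
and every monomial on the right has `(π₂, π₄)`-weight `w(g) + w(h)`, as `σ` and `δ` have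
weight zero. If that weight is nonzero, the bracket is a combination of generators of the first
kind. If it vanishes, then `h₄ = -g₄`, and since `∂₃` is a derivation,
`T(x^g) x^h + x^g T(x^h) = (x^{δ,0}∂₃ + 2) x^{g+h}` is a generator of the third kind (or a
combination of ones of the second kind), while `x^{σ+g+h}` is of the second kind unless its
coefficient `-(g₁ + h₁) g₂` vanishes.

Conversely `[x^{0,0}, x^{α,i}] = α₄ x^{α,i}` and, for `ρ₄ = β₄ = 0`,
`[x^{ρ,0}, x^{β-σ-ρ,i}] = (ρ₁β₂ - (β₁ - 1)ρ₂) x^{β,i}`; taking `ρ = σ`, or `ρ ∈ ker π₄ \ ker π₂`,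
gives the first two kinds. For the third, `[x^{τ,0}, x^{γ-τ,i}]` with `τ₄ ≠ 0` is
`-τ₄ (x^{δ,0}∂₃ + 2) x^{γ,i}` up to a multiple of `x^{σ+γ,i}`, which is of the second kind.
-/

variable {D : Datum F}

abbrev sigmaIdx (D : Datum F) : ↥D.Γ × ↥(Jmon D.m) := (⟨sigmaV F, D.sigma_mem⟩, 0)

abbrev deltaIdx (D : Datum F) : ↥D.Γ × ↥(Jmon D.m) := (⟨deltaV F D.d3, D.delta_mem⟩, 0)

@[simp] lemma sigmaV_zero : sigmaV F 0 = 1 := rfl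
@[simp] lemma sigmaV_one : sigmaV F 1 = 0 := rfl
@[simp] lemma sigmaV_three : sigmaV F 3 = 0 := rfl
@[simp] lemma deltaV_zero (d : F) : deltaV F d 0 = 0 := rfl
@[simp] lemma deltaV_one (d : F) : deltaV F d 1 = 0 := rfl
@[simp] lemma deltaV_three (d : F) : deltaV F d 3 = 0 := rfl

lemma X_mul (g h : ↥D.Γ × ↥(Jmon D.m)) : X D g * X D h = X D (g + h) := by
  simp [X, AddMonoidAlgebra.single_mul_single]

lemma subE_add {p : Fin 4} {i : ↥(Jmon D.m)} (hi : i.1 p ≠ 0) (j : ↥(Jmon D.m)) :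
    subE i p + j = subE (i + j) p := by
  refine Subtype.ext (funext fun q => ?_)
  rcases eq_or_ne q p with rfl | hq
  · simp only [subE, AddSubmonoid.coe_add, Pi.add_apply, Pi.sub_apply, Pi.single_eq_same]
    omega
  · simp [subE, Pi.single_eq_of_ne hq]

-- `subE` truncates, so for `g.2 p = 0` the two indices may differ; the coefficient is then zero.
lemma natCast_smul_X_subE_add (p : Fin 4) (g h : ↥D.Γ × ↥(Jmon D.m)) :
    (g.2.1 p : F) • X D ((g.1, subE g.2 p) + h)
      = (g.2.1 p : F) • X D ((g + h).1, subE (g + h).2 p) := by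
  by_cases hg : g.2.1 p = 0
  · simp [hg]
  · rw [Prod.mk_add_mk, subE_add hg]; rfl

lemma natCast_smul_X_add_subE (p : Fin 4) (g h : ↥D.Γ × ↥(Jmon D.m)) :
    (h.2.1 p : F) • X D (g + (h.1, subE h.2 p))
      = (h.2.1 p : F) • X D ((g + h).1, subE (g + h).2 p) := by
  rw [add_comm g, add_comm g h]
  exact natCast_smul_X_subE_add p h g

lemma Dop_X (p : Fin 4) (g : ↥D.Γ × ↥(Jmon D.m)) : Dop D p (X D g) = Dmon D p g := by
  rw [Dop, X, AddMonoidAlgebra.coeff_single, Finsupp.sum_single_index (by simp), one_smul]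

lemma Dop_zero (p : Fin 4) : Dop D p 0 = 0 := by
  simp [Dop]

lemma Dop_add (p : Fin 4) (u v : Alg D) : Dop D p (u + v) = Dop D p u + Dop D p v :=
  Finsupp.sum_add_index' (fun _ => zero_smul F _) (fun _ b c => add_smul b c _)

lemma Dop_smul (p : Fin 4) (c : F) (u : Alg D) : Dop D p (c • u) = c • Dop D p u := by
  rw [Dop, Dop, AddMonoidAlgebra.coeff_smul, Finsupp.smul_sum,
    Finsupp.sum_smul_index' (h0 := fun i => zero_smul F (Dmon D p i))]
  simp [smul_smul]

lemma Dmon_of_m_eq_false {p : Fin 4} (hp : D.m p = false) (g : ↥D.Γ × ↥(Jmon D.m)) :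
    Dmon D p g = g.1.1 p • X D g := by
  simp [Dmon, g.2.2 p hp]

lemma Dmon_add (p : Fin 4) (g h : ↥D.Γ × ↥(Jmon D.m)) :
    Dmon D p (g + h) = Dmon D p g * X D h + X D g * Dmon D p h := by
  simp only [Dmon, add_mul, mul_add, smul_mul_assoc, mul_smul_comm, X_mul]
  rw [natCast_smul_X_subE_add, natCast_smul_X_add_subE]
  simp only [Prod.fst_add, Prod.snd_add, AddSubgroup.coe_add, Pi.add_apply,
    AddSubmonoid.coe_add, Nat.cast_add]
  module

lemma br_zero_left (v : Alg D) : br D 0 v = 0 := by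
  simp [br, Dop_zero]

lemma br_zero_right (u : Alg D) : br D u 0 = 0 := by
  simp [br, Dop_zero]

lemma br_add_left (u u' v : Alg D) : br D (u + u') v = br D u v + br D u' v := by
  simp only [br, Dop_add]; ring

lemma br_add_right (u v v' : Alg D) : br D u (v + v') = br D u v + br D u v' := by
  simp only [br, Dop_add]; ring

lemma br_smul_left (c : F) (u v : Alg D) : br D (c • u) v = c • br D u v := by
  simp only [br, Dop_smul]; simp only [Algebra.smul_def]; ring

lemma br_smul_right (c : F) (u v : Alg D) : br D u (c • v) = c • br D u v := by
  simp only [br, Dop_smul]; simp only [Algebra.smul_def]; ring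

lemma br_mem_of_forall_X {P : Submodule F (Alg D)}
    (hP : ∀ g h, br D (X D g) (X D h) ∈ P) (u v : Alg D) : br D u v ∈ P := by
  have single_eq (g : ↥D.Γ × ↥(Jmon D.m)) (c : F) :
      AddMonoidAlgebra.single g c = c • X D g := by
    rw [X, AddMonoidAlgebra.smul_single, smul_eq_mul, mul_one]
  induction u using AddMonoidAlgebra.induction_linear with
  | zero => rw [br_zero_left]; exact zero_mem P
  | add u u' hu hu' => rw [br_add_left]; exact add_mem hu hu'
  | single g c =>
    induction v using AddMonoidAlgebra.induction_linear with
    | zero => rw [br_zero_right]; exact zero_mem P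
    | add v v' hv hv' => rw [br_add_right]; exact add_mem hv hv'
    | single h d =>
      rw [single_eq, single_eq, br_smul_left, br_smul_right]
      exact P.smul_mem _ (P.smul_mem _ (hP g h))

noncomputable def deltaOp (D : Datum F) (u : Alg D) : Alg D :=
  X D (deltaIdx D) * Dop D 2 u + u

lemma deltaOp_X_mul_add_X_mul_deltaOp (g h : ↥D.Γ × ↥(Jmon D.m)) :
    deltaOp D (X D g) * X D h + X D g * deltaOp D (X D h)
      = deltaOp D (X D (g + h)) + X D (g + h) := by
  simp only [deltaOp, Dop_X, Dmon_add]
  simp only [← X_mul]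
  ring

lemma br_X_X (h1 : D.m 0 = false) (h2 : D.m 1 = false) (h4 : D.m 3 = false)
    (g h : ↥D.Γ × ↥(Jmon D.m)) :
    br D (X D g) (X D h) =
      (g.1.1 0 * h.1.1 1 - h.1.1 0 * g.1.1 1) • X D (sigmaIdx D + g + h)
        + h.1.1 3 • (deltaOp D (X D g) * X D h) - g.1.1 3 • (X D g * deltaOp D (X D h)) := by
  simp only [br, deltaOp, Dop_X, Dmon_of_m_eq_false h1, Dmon_of_m_eq_false h2,
    Dmon_of_m_eq_false h4]
  simp only [← X_mul, Algebra.smul_def, map_sub, map_mul]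
  ring

lemma br_X_X_of_add_eq_zero (h1 : D.m 0 = false) (h2 : D.m 1 = false) (h4 : D.m 3 = false)
    (g h : ↥D.Γ × ↥(Jmon D.m)) (h3 : g.1.1 3 + h.1.1 3 = 0) :
    br D (X D g) (X D h) =
      (g.1.1 0 * h.1.1 1 - h.1.1 0 * g.1.1 1) • X D (sigmaIdx D + g + h)
        - g.1.1 3 • (deltaOp D (X D (g + h)) + X D (g + h)) := by
  rw [br_X_X h1 h2 h4, ← deltaOp_X_mul_add_X_mul_deltaOp, eq_neg_of_add_eq_zero_right h3]
  module

noncomputable def twistedX (D : Datum F) (γ : D.Γ) (i : ↥(Jmon D.m)) : Alg D :=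
  (γ.1 2) • X D (⟨γ.1 + deltaV F D.d3, D.Γ.add_mem γ.2 D.delta_mem⟩, i)
    + ((i.1 2 : F)) • X D (⟨γ.1 + deltaV F D.d3, D.Γ.add_mem γ.2 D.delta_mem⟩, subE i 2)
    + (2 : F) • X D (γ, i)

lemma deltaOp_X_add_X (γ : D.Γ) (i : ↥(Jmon D.m)) :
    deltaOp D (X D (γ, i)) + X D (γ, i) = twistedX D γ i := by
  have shift (j : ↥(Jmon D.m)) : deltaIdx D + (γ, j)
      = (⟨γ.1 + deltaV F D.d3, D.Γ.add_mem γ.2 D.delta_mem⟩, j) :=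
    Prod.ext (Subtype.ext (add_comm _ _)) (zero_add j)
  simp only [deltaOp, twistedX, Dop_X, Dmon, mul_add, mul_smul_comm, X_mul, shift]
  module

def generators (D : Datum F) : Set (Alg D) :=
  {w | ∃ (α : D.Γ) (i : ↥(Jmon D.m)),
      ((α.1 1, α.1 3) : F × F) ≠ (0, 0) ∧ w = X D (α, i)} ∪
   {w | ∃ (β : D.Γ) (i : ↥(Jmon D.m)),
      β.1 1 = 0 ∧ β.1 3 = 0 ∧ β.1 0 ≠ 1 ∧ w = X D (β, i)} ∪
   {w | ∃ (γ : D.Γ) (i : ↥(Jmon D.m)),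
      γ.1 1 = 0 ∧ γ.1 3 = 0 ∧ γ.1 0 = 1 ∧ w = twistedX D γ i}

lemma X_mem_span_generators_of_coords_ne_zero {α : D.Γ}
    (hα : ((α.1 1, α.1 3) : F × F) ≠ (0, 0)) (i : ↥(Jmon D.m)) :
    X D (α, i) ∈ Submodule.span F (generators D) :=
  Submodule.subset_span (Or.inl (Or.inl ⟨α, i, hα, rfl⟩))

lemma X_mem_span_generators_of_coords_eq_zero {β : D.Γ} (hβ1 : β.1 1 = 0) (hβ3 : β.1 3 = 0)
    (hβ0 : β.1 0 ≠ 1) (i : ↥(Jmon D.m)) : X D (β, i) ∈ Submodule.span F (generators D) :=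
  Submodule.subset_span (Or.inl (Or.inr ⟨β, i, hβ1, hβ3, hβ0, rfl⟩))

lemma twistedX_mem_span_generators {γ : D.Γ} (hγ1 : γ.1 1 = 0) (hγ3 : γ.1 3 = 0)
    (i : ↥(Jmon D.m)) : twistedX D γ i ∈ Submodule.span F (generators D) := by
  by_cases hγ0 : γ.1 0 = 1
  · exact Submodule.subset_span (Or.inr ⟨γ, i, hγ1, hγ3, hγ0, rfl⟩)
  have hshift (j : ↥(Jmon D.m)) :
      X D (⟨γ.1 + deltaV F D.d3, D.Γ.add_mem γ.2 D.delta_mem⟩, j)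
        ∈ Submodule.span F (generators D) :=
    X_mem_span_generators_of_coords_eq_zero (by simp [hγ1]) (by simp [hγ3])
      (by simpa using hγ0) j
  exact add_mem (add_mem (Submodule.smul_mem _ _ (hshift i)) (Submodule.smul_mem _ _ (hshift _)))
    (Submodule.smul_mem _ _ (X_mem_span_generators_of_coords_eq_zero hγ1 hγ3 hγ0 i))

lemma br_X_X_mem_span_generators (h1 : D.m 0 = false) (h2 : D.m 1 = false)
    (h4 : D.m 3 = false) (g h : ↥D.Γ × ↥(Jmon D.m)) :
    br D (X D g) (X D h) ∈ Submodule.span F (generators D) := by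
  by_cases hw : g.1.1 1 + h.1.1 1 = 0 ∧ g.1.1 3 + h.1.1 3 = 0
  · obtain ⟨hw1, hw3⟩ := hw
    rw [br_X_X_of_add_eq_zero h1 h2 h4 g h hw3, deltaOp_X_add_X (g + h).1 (g + h).2]
    refine sub_mem ?_ (Submodule.smul_mem _ _ (twistedX_mem_span_generators hw1 hw3 _))
    by_cases h0 : g.1.1 0 + h.1.1 0 = 0
    · have hc : g.1.1 0 * h.1.1 1 - h.1.1 0 * g.1.1 1 = 0 := by
        linear_combination g.1.1 0 * hw1 - g.1.1 1 * h0
      rw [hc, zero_smul]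
      exact zero_mem _
    · refine Submodule.smul_mem _ _ (X_mem_span_generators_of_coords_eq_zero ?_ ?_ ?_ _) <;>
        simp [add_assoc, hw1, hw3, h0]
  · have hX (k : ↥D.Γ × ↥(Jmon D.m)) (hk1 : k.1.1 1 = g.1.1 1 + h.1.1 1)
        (hk3 : k.1.1 3 = g.1.1 3 + h.1.1 3) : X D k ∈ Submodule.span F (generators D) :=
      X_mem_span_generators_of_coords_ne_zero (by simpa [hk1, hk3] using hw) k.2
    rw [br_X_X h1 h2 h4]
    simp only [deltaOp, Dop_X, Dmon, mul_add, add_mul, smul_mul_assoc, mul_smul_comm, X_mul]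
    repeat' first | apply hX | apply add_mem | apply sub_mem | apply Submodule.smul_mem
    all_goals simp

lemma Datum.exists_coord_three_ne_zero (D : Datum F) (h4 : D.m 3 = false) :
    ∃ τ : D.Γ, τ.1 3 ≠ 0 := by
  by_contra! h
  simpa [h4] using D.J4_cond fun α hα => h ⟨α, hα⟩

lemma Datum.exists_coord_three_eq_zero_coord_one_ne_zero (D : Datum F) (h2 : D.m 1 = false) :
    ∃ ρ : D.Γ, ρ.1 3 = 0 ∧ ρ.1 1 ≠ 0 := by
  have hπ2 : ∃ α ∈ D.Γ, α 1 ≠ 0 := by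
    by_contra! h
    simpa [h2] using D.J2_cond h
  obtain ⟨α, hα, h3, h1⟩ := D.ker_cond hπ2
  exact ⟨⟨α, hα⟩, h3, h1⟩

lemma br_mem_Bspan (u v : Alg D) : br D u v ∈ Bspan D :=
  Submodule.subset_span ⟨u, v, rfl⟩

lemma mem_Bspan_of_br_eq_smul {c : F} (hc : c ≠ 0) {u v w : Alg D} (h : br D u v = c • w) :
    w ∈ Bspan D :=
  (Submodule.smul_mem_iff _ hc).mp (h ▸ br_mem_Bspan u v)

lemma br_X_zero_X (h1 : D.m 0 = false) (h2 : D.m 1 = false) (h4 : D.m 3 = false)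
    (g : ↥D.Γ × ↥(Jmon D.m)) : br D (X D 0) (X D g) = g.1.1 3 • X D g := by
  simp [br_X_X h1 h2 h4, deltaOp, Dop_X, Dmon, X_mul]

lemma br_X_X_sub_sigma_sub (h1 : D.m 0 = false) (h2 : D.m 1 = false) (h4 : D.m 3 = false)
    {ρ β : D.Γ} (hρ : ρ.1 3 = 0) (hβ : β.1 3 = 0) (i : ↥(Jmon D.m)) :
    br D (X D (ρ, 0)) (X D (β - ⟨sigmaV F, D.sigma_mem⟩ - ρ, i))
      = (ρ.1 0 * β.1 1 - (β.1 0 - 1) * ρ.1 1) • X D (β, i) := by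
  have hidx : sigmaIdx D + (ρ, 0) + (β - ⟨sigmaV F, D.sigma_mem⟩ - ρ, i) = (β, i) :=
    Prod.ext (by simp only [Prod.fst_add]; abel) (by simp)
  rw [br_X_X h1 h2 h4, hidx]
  simp only [AddSubgroupClass.coe_sub, Pi.sub_apply, sigmaV_zero, sigmaV_one, sigmaV_three,
    hρ, hβ, sub_zero, sub_self, zero_smul, add_zero]
  congr 1
  ring

lemma X_mem_Bspan_of_coords_eq_zero (h1 : D.m 0 = false) (h2 : D.m 1 = false)
    (h4 : D.m 3 = false) {β : D.Γ} (hβ1 : β.1 1 = 0) (hβ3 : β.1 3 = 0) (hβ0 : β.1 0 ≠ 1)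
    (i : ↥(Jmon D.m)) :
    X D (β, i) ∈ Bspan D := by
  obtain ⟨ρ, hρ3, hρ1⟩ := D.exists_coord_three_eq_zero_coord_one_ne_zero h2
  refine mem_Bspan_of_br_eq_smul ?_ (br_X_X_sub_sigma_sub h1 h2 h4 hρ3 hβ3 i)
  simpa [hβ1, sub_eq_zero] using ⟨hβ0, hρ1⟩

lemma X_mem_Bspan_of_coords_ne_zero (h1 : D.m 0 = false) (h2 : D.m 1 = false)
    (h4 : D.m 3 = false) {α : D.Γ} (hα : ((α.1 1, α.1 3) : F × F) ≠ (0, 0))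
    (i : ↥(Jmon D.m)) :
    X D (α, i) ∈ Bspan D := by
  by_cases hα3 : α.1 3 = 0
  · have hα1 : α.1 1 ≠ 0 := by simpa [hα3] using hα
    have hbr := br_X_X_sub_sigma_sub h1 h2 h4 (ρ := ⟨sigmaV F, D.sigma_mem⟩) rfl hα3 i
    exact mem_Bspan_of_br_eq_smul hα1 (by simpa using hbr)
  · exact mem_Bspan_of_br_eq_smul hα3 (br_X_zero_X h1 h2 h4 (α, i))

lemma twistedX_mem_Bspan (h1 : D.m 0 = false) (h2 : D.m 1 = false) (h4 : D.m 3 = false)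
    {γ : D.Γ} (hγ1 : γ.1 1 = 0) (hγ3 : γ.1 3 = 0) (hγ0 : γ.1 0 = 1) (i : ↥(Jmon D.m)) :
    twistedX D γ i ∈ Bspan D := by
  obtain ⟨τ, hτ⟩ := D.exists_coord_three_ne_zero h4
  have hbr := br_X_X_of_add_eq_zero h1 h2 h4 (τ, 0) (γ - τ, i) (by simp [hγ3])
  have hsum : ((τ, 0) + (γ - τ, i) : ↥D.Γ × ↥(Jmon D.m)) = (γ, i) :=
    Prod.ext (add_sub_cancel τ γ) (zero_add i)
  rw [hsum, deltaOp_X_add_X] at hbr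
  dsimp only at hbr
  have hσ : X D (sigmaIdx D + (τ, 0) + (γ - τ, i)) ∈ Bspan D :=
    X_mem_Bspan_of_coords_eq_zero h1 h2 h4 (by simp [hγ1]) (by simp [hγ3]) (by simp [hγ0]) _
  have key : τ.1 3 • twistedX D γ i = (τ.1 0 * (γ - τ).1 1 - (γ - τ).1 0 * τ.1 1)
      • X D (sigmaIdx D + (τ, 0) + (γ - τ, i)) - br D (X D (τ, 0)) (X D (γ - τ, i)) := by
    rw [hbr, sub_sub_cancel]
  refine (Submodule.smul_mem_iff _ hτ).mp ?_
  rw [key]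
  exact sub_mem (Submodule.smul_mem _ _ hσ) (br_mem_Bspan _ _)

theorem derived_subalgebra_span_general (F : Type*) [Field F] (D : Datum F)
    (h1 : D.m 0 = false) (h2 : D.m 1 = false) (h4 : D.m 3 = false) :
    Bspan D = Submodule.span F
      ({w | ∃ (α : D.Γ) (i : ↥(Jmon D.m)),
          ((α.1 1, α.1 3) : F × F) ≠ (0, 0) ∧ w = X D (α, i)} ∪
       {w | ∃ (β : D.Γ) (i : ↥(Jmon D.m)),
          β.1 1 = 0 ∧ β.1 3 = 0 ∧ β.1 0 ≠ 1 ∧ w = X D (β, i)} ∪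
       {w | ∃ (γ : D.Γ) (i : ↥(Jmon D.m)),
          γ.1 1 = 0 ∧ γ.1 3 = 0 ∧ γ.1 0 = 1 ∧
          w = (γ.1 2) • X D (⟨γ.1 + deltaV F D.d3, D.Γ.add_mem γ.2 D.delta_mem⟩, i)
            + ((i.1 2 : F)) • X D (⟨γ.1 + deltaV F D.d3, D.Γ.add_mem γ.2 D.delta_mem⟩, subE i 2)
            + (2 : F) • X D (γ, i)}) := by
  change Bspan D = Submodule.span F (generators D)
  refine le_antisymm (Submodule.span_le.mpr ?_) (Submodule.span_le.mpr ?_)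
  · rintro _ ⟨u, v, rfl⟩
    exact br_mem_of_forall_X (br_X_X_mem_span_generators h1 h2 h4) u v
  · rintro _ ((⟨α, i, hα, rfl⟩ | ⟨β, i, hβ1, hβ3, hβ0, rfl⟩) |
      ⟨γ, i, hγ1, hγ3, hγ0, rfl⟩)
    · exact X_mem_Bspan_of_coords_ne_zero h1 h2 h4 hα i
    · exact X_mem_Bspan_of_coords_eq_zero h1 h2 h4 hβ1 hβ3 hβ0 i
    · exact twistedX_mem_Bspan h1 h2 h4 hγ1 hγ3 hγ0 i

/-- if `J₁ = J₂ = J₄ = {0}`, then `B = [A,A]` is spanned by the elements (2.5). -/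
theorem derived_subalgebra_span (F : Type*) [Field F] [CharZero F] (D : Datum F)
    (h1 : D.m 0 = false) (h2 : D.m 1 = false) (h4 : D.m 3 = false) :
    Bspan D = Submodule.span F
      ({w | ∃ (α : D.Γ) (i : ↥(Jmon D.m)),
          ((α.1 1, α.1 3) : F × F) ≠ (0, 0) ∧ w = X D (α, i)} ∪
       {w | ∃ (β : D.Γ) (i : ↥(Jmon D.m)),
          β.1 1 = 0 ∧ β.1 3 = 0 ∧ β.1 0 ≠ 1 ∧ w = X D (β, i)} ∪
       {w | ∃ (γ : D.Γ) (i : ↥(Jmon D.m)),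
          γ.1 1 = 0 ∧ γ.1 3 = 0 ∧ γ.1 0 = 1 ∧
          w = (γ.1 2) • X D (⟨γ.1 + deltaV F D.d3, D.Γ.add_mem γ.2 D.delta_mem⟩, i)
            + ((i.1 2 : F)) • X D (⟨γ.1 + deltaV F D.d3, D.Γ.add_mem γ.2 D.delta_mem⟩, subE i 2)
            + (2 : F) • X D (γ, i)}) :=
  derived_subalgebra_span_general F D h1 h2 h4

end SuBlock
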